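/- For a connected graph G with resistance matrix R and curvature vector μ, R·μ = (μᵀRμ)·𝟙, i.e., the vector R·μ is a constant vector with value μᵀRμ. -/

import Mathlib

open scoped Classical
open Matrix

/-- A finite multigraph without loop edges, given by endpoint maps on an edge type. -/
structure Multigraph where
  V : Type
  E : Type
  [fintV : Fintype V]
  [fintE : Fintype E]
  fst : E → V
  snd : E → V
  no_loop : ∀ e, fst e ≠ snd e

namespace Multigraph

variable (G : Multigraph)

instance : Fintype G.V := G.fintV
instance : Fintype G.E := G.fintE

/-- One step along an edge of the subgraph with edge set `S`. -/
def step (S : Finset G.E) (u v : G.V) : Prop :=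
  ∃ e ∈ S, (G.fst e = u ∧ G.snd e = v) ∨ (G.fst e = v ∧ G.snd e = u)

/-- Two vertices are in the same component of the spanning subgraph with edge set `S`. -/
def reach (S : Finset G.E) : G.V → G.V → Prop :=
  Relation.EqvGen (G.step S)

/-- Number of connected components of the spanning subgraph with edge set `S`. -/
noncomputable def ncomp (S : Finset G.E) : ℕ :=
  Nat.card (Quotient (Relation.EqvGen.setoid (G.step S)))

/-- The graph is connected. -/
def IsConnected : Prop := G.ncomp Finset.univ = 1

/-- `S` is the edge set of a spanning tree. -/
def IsSpanningTree (S : Finset G.E) : Prop :=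
  G.ncomp S = 1 ∧ S.card + 1 = Fintype.card G.V

/-- `S` is the edge set of a two-component spanning forest. -/
def IsTwoForest (S : Finset G.E) : Prop :=
  G.ncomp S = 2 ∧ S.card + 2 = Fintype.card G.V

/-- `S` is the edge set of a three-component spanning forest. -/
def IsThreeForest (S : Finset G.E) : Prop :=
  G.ncomp S = 3 ∧ S.card + 3 = Fintype.card G.V

/-- κ(G): number of spanning trees. -/
noncomputable def kappa : ℕ := Nat.card {S : Finset G.E // G.IsSpanningTree S}

/-- κ₂(G): number of two-component spanning forests. -/
noncomputable def kappa2 : ℕ := Nat.card {S : Finset G.E // G.IsTwoForest S}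

/-- κ₂(x|y): number of two-forests with `x` and `y` in different components. -/
noncomputable def kappa2Sep (x y : G.V) : ℕ :=
  Nat.card {S : Finset G.E // G.IsTwoForest S ∧ ¬ G.reach S x y}

/-- κ₂(xy|q): number of two-forests with `x`, `y` in one component, `q` in the other. -/
noncomputable def kappa2Tog (x y q : G.V) : ℕ :=
  Nat.card {S : Finset G.E // G.IsTwoForest S ∧ G.reach S x y ∧ ¬ G.reach S x q}

/-- κ₃(x|y|q): number of three-forests with `x`, `y`, `q` in pairwise distinct components. -/
noncomputable def kappa3Sep (x y q : G.V) : ℕ :=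
  Nat.card {S : Finset G.E //
    G.IsThreeForest S ∧ ¬ G.reach S x y ∧ ¬ G.reach S x q ∧ ¬ G.reach S y q}

/-- Effective resistance: r(x,y) = κ₂(x|y)/κ(G). -/
noncomputable def res (x y : G.V) : ℝ := (G.kappa2Sep x y : ℝ) / (G.kappa : ℝ)

/-- Potential kernel: j_q(x,y) = κ₂(xy|q)/κ(G). -/
noncomputable def jfun (q x y : G.V) : ℝ := (G.kappa2Tog x y q : ℝ) / (G.kappa : ℝ)

/-- Cut size |∂F| of a two-forest with edge set `S`: edges joining the two components. -/
noncomputable def cutSize (S : Finset G.E) : ℕ :=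
  Nat.card {e : G.E // ¬ G.reach S (G.fst e) (G.snd e)}

/-- The curvature vector μ. -/
noncomputable def mu (x : G.V) : ℝ :=
  1 - (1/2) * ∑ e : G.E,
    (if G.fst e = x ∨ G.snd e = x then G.res (G.fst e) (G.snd e) else 0)

/-- The Laplacian matrix of `G`. -/
noncomputable def lap : Matrix G.V G.V ℝ := fun v w =>
  (if v = w then (Nat.card {e : G.E // G.fst e = v ∨ G.snd e = v} : ℝ) else 0)
    - (Nat.card {e : G.E // (G.fst e = v ∧ G.snd e = w) ∨ (G.fst e = w ∧ G.snd e = v)} : ℝ)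

/-- The effective resistance matrix of `G`. -/
noncomputable def resMatrix : Matrix G.V G.V ℝ := fun v w => G.res v w

/-- `v` is an endpoint of `e`. -/
def Ends (e : G.E) (v : G.V) : Prop := G.fst e = v ∨ G.snd e = v

/-- the endpoint of `e` other than `v`. -/
noncomputable def other (v : G.V) (e : G.E) : G.V :=
  if G.fst e = v then G.snd e else G.fst e

/-- The component quotient. -/
def cquot (S : Finset G.E) : Type := Quotient (Relation.EqvGen.setoid (G.step S))

/-- The class of a vertex. -/
def cmk (S : Finset G.E) (x : G.V) : G.cquot S :=
  Quotient.mk (Relation.EqvGen.setoid (G.step S)) x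

variable {G}

lemma other_fst (e : G.E) : G.other (G.fst e) e = G.snd e := if_pos rfl

lemma other_snd (e : G.E) : G.other (G.snd e) e = G.fst e := if_neg (G.no_loop e)

lemma step_symm {S : Finset G.E} : Symmetric (G.step S) := by
  rintro a b ⟨e, he, h | h⟩
  · exact ⟨e, he, Or.inr h⟩
  · exact ⟨e, he, Or.inl h⟩

lemma reach_refl (S : Finset G.E) (x : G.V) : G.reach S x x := Relation.EqvGen.refl x

lemma reach_symm {S : Finset G.E} {x y : G.V} (h : G.reach S x y) : G.reach S y x :=
  Relation.EqvGen.symm _ _ h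

lemma reach_trans {S : Finset G.E} {x y z : G.V} (h : G.reach S x y) (h' : G.reach S y z) :
    G.reach S x z := Relation.EqvGen.trans _ _ _ h h'

lemma step_reach {S : Finset G.E} {x y : G.V} (h : G.step S x y) : G.reach S x y :=
  Relation.EqvGen.rel _ _ h

lemma reach_mono {S S' : Finset G.E} (hss : S ⊆ S') {x y : G.V} (h : G.reach S x y) :
    G.reach S' x y :=
  Relation.EqvGen.mono (r := G.step S) (p := G.step S') (fun a b ⟨e, he, hh⟩ => ⟨e, hss he, hh⟩) _ _ h

lemma reach_iff_rtg {S : Finset G.E} {x y : G.V} :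
    G.reach S x y ↔ Relation.ReflTransGen (G.step S) x y := by
  constructor
  · intro h
    induction h with
    | rel a b hab => exact Relation.ReflTransGen.single hab
    | refl a => exact Relation.ReflTransGen.refl
    | symm a b _ ih => exact (haveI : Std.Symm (G.step S) := ⟨step_symm⟩; Std.Symm.symm _ _ ih)
    | trans a b c _ _ ih1 ih2 => exact ih1.trans ih2
  · intro h
    induction h with
    | refl => exact reach_refl _ _
    | tail _ hbc ih => exact reach_trans ih (step_reach hbc)

lemma ends_step {S : Finset G.E} {e : G.E} {v : G.V} (hv : G.Ends e v) (he : e ∈ S) :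
    G.step S v (G.other v e) := by
  rcases hv with h | h
  · refine ⟨e, he, Or.inl ⟨h, ?_⟩⟩
    rw [← h, other_fst]
  · by_cases hf : G.fst e = v
    · exact ⟨e, he, Or.inl ⟨hf, by rw [← hf, other_fst]⟩⟩
    · refine ⟨e, he, Or.inr ⟨?_, h⟩⟩
      rw [← h, other_snd]

lemma reach_insert_iff {S : Finset G.E} {e : G.E} {x y : G.V} :
    G.reach (insert e S) x y ↔ G.reach S x y ∨
      (G.reach S x (G.fst e) ∧ G.reach S (G.snd e) y) ∨
      (G.reach S x (G.snd e) ∧ G.reach S (G.fst e) y) := by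
  constructor
  · intro h
    induction h with
    | rel a b hab =>
      rcases hab with ⟨f, hf, hor⟩
      rcases Finset.mem_insert.1 hf with rfl | hfS
      · rcases hor with ⟨h1, h2⟩ | ⟨h1, h2⟩
        · exact Or.inr (Or.inl ⟨h1 ▸ reach_refl _ _, h2 ▸ reach_refl _ _⟩)
        · exact Or.inr (Or.inr ⟨h2 ▸ reach_refl _ _, h1 ▸ reach_refl _ _⟩)
      · exact Or.inl (step_reach ⟨f, hfS, hor⟩)
    | refl a => exact Or.inl (reach_refl _ _)
    | symm a b _ ih =>
      rcases ih with h | ⟨h1, h2⟩ | ⟨h1, h2⟩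
      · exact Or.inl (reach_symm h)
      · exact Or.inr (Or.inr ⟨reach_symm h2, reach_symm h1⟩)
      · exact Or.inr (Or.inl ⟨reach_symm h2, reach_symm h1⟩)
    | trans a b c _ _ ih1 ih2 =>
      rcases ih1 with h | ⟨h1, h2⟩ | ⟨h1, h2⟩ <;>
        rcases ih2 with h' | ⟨h1', h2'⟩ | ⟨h1', h2'⟩
      · exact Or.inl (reach_trans h h')
      · exact Or.inr (Or.inl ⟨reach_trans h h1', h2'⟩)
      · exact Or.inr (Or.inr ⟨reach_trans h h1', h2'⟩)
      · exact Or.inr (Or.inl ⟨h1, reach_trans h2 h'⟩)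
      · exact Or.inl (reach_trans h1 (reach_trans (reach_symm h1')
          (reach_trans (reach_symm h2) h2')))
      · exact Or.inl (reach_trans h1 h2')
      · exact Or.inr (Or.inr ⟨h1, reach_trans h2 h'⟩)
      · exact Or.inl (reach_trans h1 h2')
      · exact Or.inl (reach_trans h1 (reach_trans (reach_symm h1')
          (reach_trans (reach_symm h2) h2')))
  · rintro (h | ⟨h1, h2⟩ | ⟨h1, h2⟩)
    · exact reach_mono (Finset.subset_insert _ _) h
    · exact reach_trans (reach_mono (Finset.subset_insert _ _) h1)
        (reach_trans (step_reach ⟨e, Finset.mem_insert_self _ _, Or.inl ⟨rfl, rfl⟩⟩)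
          (reach_mono (Finset.subset_insert _ _) h2))
    · exact reach_trans (reach_mono (Finset.subset_insert _ _) h1)
        (reach_trans (step_reach ⟨e, Finset.mem_insert_self _ _, Or.inr ⟨rfl, rfl⟩⟩)
          (reach_mono (Finset.subset_insert _ _) h2))


section ncomp

local notation "Qt" S => Quotient (Relation.EqvGen.setoid (G.step S))

lemma cmk_eq_iff {S : Finset G.E} {x y : G.V} :
    G.cmk S x = G.cmk S y ↔ G.reach S x y := by
  constructor
  · intro h; exact Quotient.exact h
  · intro h; exact Quotient.sound h

lemma cmk_surjective {S : Finset G.E} : Function.Surjective (G.cmk S) := by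
  intro z
  induction z using Quotient.ind with | _ x => exact ⟨x, rfl⟩

lemma ncomp_eq_card_cquot (S : Finset G.E) : G.ncomp S = Nat.card (G.cquot S) := rfl

lemma reach_empty {x y : G.V} : G.reach (∅ : Finset G.E) x y ↔ x = y := by
  constructor
  · intro h
    induction h with
    | rel a b hab => exact absurd hab.choose_spec.1 (Finset.notMem_empty _)
    | refl a => rfl
    | symm a b _ ih => exact ih.symm
    | trans a b c _ _ ih1 ih2 => exact ih1.trans ih2
  · rintro rfl; exact reach_refl _ _

lemma ncomp_empty : G.ncomp (∅ : Finset G.E) = Fintype.card G.V := by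
  rw [ncomp_eq_card_cquot, ← Nat.card_eq_fintype_card]
  have hresp : ∀ a b : G.V, G.reach (∅ : Finset G.E) a b → id a = id b :=
    fun a b h => reach_empty.1 h
  refine Nat.card_congr ⟨Quotient.lift id hresp, fun v => G.cmk ∅ v, ?_, fun v => rfl⟩
  intro z
  obtain ⟨x, rfl⟩ := cmk_surjective z
  rfl

lemma ncomp_insert_of_reach {S : Finset G.E} {e : G.E}
    (h : G.reach S (G.fst e) (G.snd e)) : G.ncomp (insert e S) = G.ncomp S := by
  have : Relation.EqvGen.setoid (G.step (insert e S)) = Relation.EqvGen.setoid (G.step S) := by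
    refine Setoid.ext fun x y => ?_
    show G.reach (insert e S) x y ↔ G.reach S x y
    rw [reach_insert_iff]
    constructor
    · rintro (h' | ⟨h1, h2⟩ | ⟨h1, h2⟩)
      · exact h'
      · exact reach_trans h1 (reach_trans h h2)
      · exact reach_trans h1 (reach_trans (reach_symm h) h2)
    · exact Or.inl
  rw [ncomp, ncomp, this]

lemma ncomp_insert_of_not_reach {S : Finset G.E} {e : G.E}
    (h : ¬ G.reach S (G.fst e) (G.snd e)) :
    G.ncomp S = G.ncomp (insert e S) + 1 := by
  have hresp : ∀ a b : G.V, G.reach S a b → G.cmk (insert e S) a = G.cmk (insert e S) b :=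
    fun a b hab => cmk_eq_iff.2 (reach_mono (Finset.subset_insert _ _) hab)
  have hbij : Function.Bijective (fun z : {z : G.cquot S // z ≠ G.cmk S (G.snd e)} =>
      Quotient.lift (fun x => G.cmk (insert e S) x) hresp z.1) := by
    constructor
    · rintro ⟨z1, hz1⟩ ⟨z2, hz2⟩ hz
      obtain ⟨x, rfl⟩ := cmk_surjective z1
      obtain ⟨y, rfl⟩ := cmk_surjective z2
      have hr : G.reach (insert e S) x y := cmk_eq_iff.1 hz
      rcases reach_insert_iff.1 hr with h' | ⟨h1, h2⟩ | ⟨h1, h2⟩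
      · exact Subtype.ext (cmk_eq_iff.2 h')
      · exact absurd (cmk_eq_iff.2 (reach_symm h2)) hz2
      · exact absurd (cmk_eq_iff.2 h1) hz1
    · intro z
      obtain ⟨x, rfl⟩ := cmk_surjective z
      by_cases hxb : G.reach S x (G.snd e)
      · refine ⟨⟨G.cmk S (G.fst e), fun hc => h (cmk_eq_iff.1 hc)⟩, ?_⟩
        show G.cmk (insert e S) (G.fst e) = G.cmk (insert e S) x
        exact cmk_eq_iff.2 (reach_symm
          (reach_insert_iff.2 (Or.inr (Or.inr ⟨hxb, reach_refl _ _⟩))))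
      · exact ⟨⟨G.cmk S x, fun hc => hxb (cmk_eq_iff.1 hc)⟩, rfl⟩
  have hcard : Nat.card {z : G.cquot S // z ≠ G.cmk S (G.snd e)} =
      Nat.card (G.cquot (insert e S)) :=
    Nat.card_congr (Equiv.ofBijective _ hbij)
  rw [ncomp_eq_card_cquot, ncomp_eq_card_cquot, ← hcard]
  haveI : Fintype (G.cquot S) := Quotient.fintype _
  rw [Nat.card_eq_fintype_card, Nat.card_eq_fintype_card]
  have h1 : Fintype.card {z : G.cquot S // ¬ (z = G.cmk S (G.snd e))} =
      Fintype.card (G.cquot S) - Fintype.card {z : G.cquot S // z = G.cmk S (G.snd e)} :=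
    Fintype.card_subtype_compl _
  have h2 : Fintype.card {z : G.cquot S // z = G.cmk S (G.snd e)} = 1 :=
    Fintype.card_subtype_eq _
  have h3 : 0 < Fintype.card (G.cquot S) := Fintype.card_pos_iff.2 ⟨G.cmk S (G.snd e)⟩
  have h4 : Fintype.card {z : G.cquot S // z ≠ G.cmk S (G.snd e)} =
      Fintype.card {z : G.cquot S // ¬ (z = G.cmk S (G.snd e))} := rfl
  omega

lemma card_le_ncomp_add_card (S : Finset G.E) :
    Fintype.card G.V ≤ G.ncomp S + S.card := by
  induction S using Finset.induction_on with
  | empty => simp [ncomp_empty]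
  | @insert e S he ih =>
    rw [Finset.card_insert_of_notMem he]
    by_cases h : G.reach S (G.fst e) (G.snd e)
    · rw [ncomp_insert_of_reach h]; omega
    · have := ncomp_insert_of_not_reach h; omega

lemma reach_of_ncomp_one {S : Finset G.E} (h : G.ncomp S = 1) (x y : G.V) :
    G.reach S x y := by
  rw [ncomp_eq_card_cquot, Nat.card_eq_one_iff_unique] at h
  haveI := h.1
  exact cmk_eq_iff.1 (Subsingleton.elim _ _)

lemma reach_or_of_ncomp_two {S : Finset G.E} (h : G.ncomp S = 2) {x y : G.V}
    (hxy : ¬ G.reach S x y) (w : G.V) : G.reach S w x ∨ G.reach S w y := by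
  by_contra hc
  push_neg at hc
  rw [ncomp_eq_card_cquot, Nat.card_eq_two_iff] at h
  obtain ⟨a, c, hac, huniv⟩ := h
  have hmem : ∀ z : G.V, G.cmk S z = a ∨ G.cmk S z = c := by
    intro z
    have : G.cmk S z ∈ ({a, c} : Set _) := huniv ▸ Set.mem_univ _
    simpa using this
  have hxa := hmem x
  have hya := hmem y
  have hwa := hmem w
  have hxy' : ¬ G.cmk S x = G.cmk S y := fun hc' => hxy (cmk_eq_iff.1 hc')
  have hwx' : ¬ G.cmk S w = G.cmk S x := fun hc' => hc.1 (cmk_eq_iff.1 hc')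
  have hwy' : ¬ G.cmk S w = G.cmk S y := fun hc' => hc.2 (cmk_eq_iff.1 hc')
  rcases hxa with h1 | h1 <;> rcases hya with h2 | h2 <;> rcases hwa with h3 | h3 <;>
    simp_all

end ncomp


section trees

variable {T S : Finset G.E} {e : G.E} {v x : G.V}

lemma tree_minus_edge (hT : G.IsSpanningTree T) (he : e ∈ T) :
    G.IsTwoForest (T.erase e) ∧ ¬ G.reach (T.erase e) (G.fst e) (G.snd e) := by
  have hins : insert e (T.erase e) = T := Finset.insert_erase he
  have hcard : (T.erase e).card + 1 = T.card := Finset.card_erase_add_one he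
  have hb := card_le_ncomp_add_card (G := G) (T.erase e)
  have hnr : ¬ G.reach (T.erase e) (G.fst e) (G.snd e) := by
    intro h
    have h1 : G.ncomp (insert e (T.erase e)) = G.ncomp (T.erase e) :=
      ncomp_insert_of_reach h
    rw [hins] at h1
    have := hT.1
    have := hT.2
    omega
  have h2 := ncomp_insert_of_not_reach hnr
  rw [hins] at h2
  have := hT.1
  have := hT.2
  exact ⟨⟨by omega, by omega⟩, hnr⟩

lemma forest_plus_edge (hS : G.IsTwoForest S) (h : ¬ G.reach S (G.fst e) (G.snd e)) :
    G.IsSpanningTree (insert e S) ∧ e ∉ S := by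
  have heS : e ∉ S := fun hc => h (step_reach ⟨e, hc, Or.inl ⟨rfl, rfl⟩⟩)
  have h2 := ncomp_insert_of_not_reach h
  have h3 : (insert e S).card = S.card + 1 := Finset.card_insert_of_notMem heS
  have := hS.1
  have := hS.2
  exact ⟨⟨by omega, by omega⟩, heS⟩

lemma not_reach_erase_other (hT : G.IsSpanningTree T) (he : e ∈ T) (hv : G.Ends e v) :
    ¬ G.reach (T.erase e) v (G.other v e) := by
  have hnr := (tree_minus_edge hT he).2
  by_cases hf : G.fst e = v
  · rw [← hf, other_fst]; exact hnr
  · have hs : G.snd e = v := hv.resolve_left hf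
    rw [← hs, other_snd]
    exact fun hc => hnr (reach_symm hc)

lemma reach_other_iff {W : Finset G.E} {v u : G.V} (hW : G.IsTwoForest W)
    (hvu : ¬ G.reach W v u) (q : G.V) : G.reach W u q ↔ ¬ G.reach W v q := by
  constructor
  · exact fun h hc => hvu (reach_trans hc (reach_symm h))
  · intro hc
    rcases reach_or_of_ncomp_two hW.1 hvu q with h | h
    · exact absurd (reach_symm h) hc
    · exact reach_symm h

end trees

variable (G) in
/-- `e` is the branch edge at `v` in tree `T` whose far side contains `x`. -/
def Br (T : Finset G.E) (v x : G.V) (e : G.E) : Prop :=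
  e ∈ T ∧ G.Ends e v ∧ ¬ G.reach (T.erase e) v x

section branch

variable {T : Finset G.E} {v x : G.V}

lemma br_ne (hx : G.Br T v x e) : x ≠ v := by
  rintro rfl
  exact hx.2.2 (reach_refl _ _)

lemma branch_exists (hT : G.IsSpanningTree T) (hx : x ≠ v) : ∃ e, G.Br T v x e := by
  have key : ∀ y, Relation.ReflTransGen (G.step T) v y → y = v ∨ ∃ e, G.Br T v y e := by
    intro y hy
    induction hy with
    | refl => exact Or.inl rfl
    | @tail b c hvb hbc ih =>
      rcases ih with rfl | ⟨e, heT, hev, hnr⟩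
      · rcases hbc with ⟨f, hfT, hor⟩
        by_cases hcv : c = b
        · exact Or.inl hcv
        · right
          rcases hor with ⟨h1, h2⟩ | ⟨h1, h2⟩
          · refine ⟨f, hfT, Or.inl h1, ?_⟩
            have h3 := (tree_minus_edge hT hfT).2
            rw [h1, h2] at h3
            exact h3
          · refine ⟨f, hfT, Or.inr h2, ?_⟩
            have h3 := (tree_minus_edge hT hfT).2
            rw [h1, h2] at h3
            exact fun hc => h3 (reach_symm hc)
      · rcases hbc with ⟨f, hfT, hor⟩
        by_cases hfe : f = e
        · subst hfe
          have hbv : b ≠ v := fun h => hnr (h ▸ reach_refl _ _)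
          rcases hor with ⟨h1, h2⟩ | ⟨h1, h2⟩ <;> rcases hev with h3 | h3
          · exact absurd (h1.symm.trans h3) hbv
          · exact Or.inl (h2.symm.trans h3)
          · exact Or.inl (h1.symm.trans h3)
          · exact absurd (h2.symm.trans h3) hbv
        · have hstep : G.step (T.erase e) b c := ⟨f, Finset.mem_erase.2 ⟨hfe, hfT⟩, hor⟩
          exact Or.inr ⟨e, heT, hev, fun hc =>
            hnr (reach_trans hc (reach_symm (step_reach hstep)))⟩
  have hr : Relation.ReflTransGen (G.step T) v x :=
    reach_iff_rtg.1 (reach_of_ncomp_one hT.1 v x)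
  rcases key x hr with rfl | he
  · exact absurd rfl hx
  · exact he

lemma branch_unique (hT : G.IsSpanningTree T) {e e' : G.E} (hne : e ≠ e')
    (h1 : G.Br T v x e) (h2 : G.Br T v x e') : False := by
  obtain ⟨heT, hev, hnr⟩ := h1
  obtain ⟨heT', hev', hnr'⟩ := h2
  -- (i) : the far side of e' contains x
  have hi : G.reach (T.erase e') (G.other v e') x := by
    have hrTvx : G.reach T v x := reach_of_ncomp_one hT.1 v x
    rw [← Finset.insert_erase heT'] at hrTvx
    by_cases hf' : G.fst e' = v
    · rcases reach_insert_iff.1 hrTvx with h | ⟨ha, hb⟩ | ⟨ha, hb⟩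
      · exact absurd h hnr'
      · rw [← hf', other_fst]; exact hb
      · rw [hf'] at hb; exact absurd hb hnr'
    · have hs' : G.snd e' = v := hev'.resolve_left hf'
      rcases reach_insert_iff.1 hrTvx with h | ⟨ha, hb⟩ | ⟨ha, hb⟩
      · exact absurd h hnr'
      · rw [hs'] at hb; exact absurd hb hnr'
      · rw [← hs', other_snd]; exact hb
  have hii : ¬ G.reach (T.erase e') v (G.other v e') :=
    fun hc => hnr' (reach_trans hc hi)
  -- now decompose (i) along removing e as well
  have heW' : e ∈ T.erase e' := Finset.mem_erase.2 ⟨hne, heT⟩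
  have heW : e' ∈ T.erase e := Finset.mem_erase.2 ⟨fun h => hne h.symm, heT'⟩
  have hU : insert e ((T.erase e).erase e') = T.erase e' := by
    rw [Finset.erase_right_comm]
    exact Finset.insert_erase heW'
  have hUsub1 : (T.erase e).erase e' ⊆ T.erase e := Finset.erase_subset _ _
  have hUsub2 : (T.erase e).erase e' ⊆ T.erase e' := by
    rw [Finset.erase_right_comm]; exact Finset.erase_subset _ _
  rw [← hU] at hi
  have hstepWvu' : G.step (T.erase e) v (G.other v e') := ends_step hev' heW
  have hcontra_a : ¬ G.reach ((T.erase e).erase e') (G.other v e') x := by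
    intro h
    exact hnr (reach_trans (step_reach hstepWvu') (reach_mono hUsub1 h))
  have hcontra_b : ¬ G.reach ((T.erase e).erase e') v x :=
    fun h => hnr (reach_mono hUsub1 h)
  have hcontra_c : ¬ G.reach ((T.erase e).erase e') (G.other v e') v :=
    fun h => hii (reach_mono hUsub2 (reach_symm h))
  by_cases hf : G.fst e = v
  · rcases reach_insert_iff.1 hi with h | ⟨ha, hb⟩ | ⟨ha, hb⟩
    · exact hcontra_a h
    · rw [hf] at ha; exact hcontra_c ha
    · rw [hf] at hb; exact hcontra_b hb
  · have hs : G.snd e = v := hev.resolve_left hf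
    rcases reach_insert_iff.1 hi with h | ⟨ha, hb⟩ | ⟨ha, hb⟩
    · exact hcontra_a h
    · rw [hs] at hb; exact hcontra_b hb
    · rw [hs] at ha; exact hcontra_c ha

lemma br_card (hT : G.IsSpanningTree T) (v x : G.V) :
    (Finset.univ.filter (G.Br T v x)).card = if x = v then 0 else 1 := by
  split_ifs with h
  · subst h
    rw [Finset.card_eq_zero, Finset.filter_eq_empty_iff]
    exact fun e _ hbr => br_ne hbr rfl
  · obtain ⟨e, he⟩ := branch_exists hT h
    rw [Finset.card_eq_one]
    refine ⟨e, ?_⟩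
    ext f
    simp only [Finset.mem_filter, Finset.mem_univ, true_and, Finset.mem_singleton]
    constructor
    · intro hf
      by_contra hne
      exact branch_unique hT hne hf he
    · rintro rfl; exact he

end branch


section counting

lemma natCard_subtype {α : Type} [Fintype α] (p : α → Prop) [DecidablePred p] :
    Nat.card {a // p a} = (Finset.univ.filter p).card := by
  haveI : Fintype {a // p a} := Subtype.fintype p
  rw [Nat.card_eq_fintype_card]
  convert Fintype.card_subtype p

lemma kappa_eq : G.kappa = (Finset.univ.filter G.IsSpanningTree).card :=
  natCard_subtype _

lemma kappa2Sep_eq (x y : G.V) : G.kappa2Sep x y =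
    (Finset.univ.filter (fun S => G.IsTwoForest S ∧ ¬ G.reach S x y)).card :=
  natCard_subtype _

lemma kappa2Tog_eq (x y q : G.V) : G.kappa2Tog x y q =
    (Finset.univ.filter (fun S => G.IsTwoForest S ∧ G.reach S x y ∧ ¬ G.reach S x q)).card :=
  natCard_subtype _

lemma kappa2Sep_comm (x y : G.V) : G.kappa2Sep x y = G.kappa2Sep y x :=
  Nat.card_congr (Equiv.subtypeEquivRight fun S =>
    ⟨fun ⟨h1, h2⟩ => ⟨h1, fun h => h2 (reach_symm h)⟩,
     fun ⟨h1, h2⟩ => ⟨h1, fun h => h2 (reach_symm h)⟩⟩)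

lemma kappa2Tog_comm (x y q : G.V) : G.kappa2Tog x y q = G.kappa2Tog y x q :=
  Nat.card_congr (Equiv.subtypeEquivRight fun S =>
    ⟨fun ⟨h1, h2, h3⟩ => ⟨h1, reach_symm h2, fun h => h3 (reach_trans h2 h)⟩,
     fun ⟨h1, h2, h3⟩ => ⟨h1, reach_symm h2, fun h => h3 (reach_trans h2 h)⟩⟩)

lemma kappa2Tog_self (x q : G.V) : G.kappa2Tog x x q = G.kappa2Sep x q :=
  Nat.card_congr (Equiv.subtypeEquivRight fun S =>
    ⟨fun ⟨h1, _, h3⟩ => ⟨h1, h3⟩, fun ⟨h1, h3⟩ => ⟨h1, reach_refl _ _, h3⟩⟩)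

lemma kappa2Tog_qq (x q : G.V) : G.kappa2Tog x q q = 0 := by
  haveI : IsEmpty {S : Finset G.E // G.IsTwoForest S ∧ G.reach S x q ∧ ¬ G.reach S x q} :=
    ⟨fun ⟨S, _, h2, h3⟩ => h3 h2⟩
  exact Nat.card_of_isEmpty

lemma kappa2Sep_self (x : G.V) : G.kappa2Sep x x = 0 := by
  haveI : IsEmpty {S : Finset G.E // G.IsTwoForest S ∧ ¬ G.reach S x x} :=
    ⟨fun ⟨S, _, h2⟩ => h2 (reach_refl _ _)⟩
  exact Nat.card_of_isEmpty

/-- The key two-forest identity `κ₂(x|q) + κ₂(y|q) = κ₂(x|y) + 2 κ₂(xy|q)`. -/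
lemma sep_identity (x y q : G.V) :
    G.kappa2Sep x q + G.kappa2Sep y q = G.kappa2Sep x y + 2 * G.kappa2Tog x y q := by
  rw [kappa2Sep_eq, kappa2Sep_eq, kappa2Sep_eq, kappa2Tog_eq,
    Finset.card_filter, Finset.card_filter, Finset.card_filter, Finset.card_filter,
    ← Finset.sum_add_distrib, Finset.mul_sum, ← Finset.sum_add_distrib]
  refine Finset.sum_congr rfl fun S _ => ?_
  by_cases hTF : G.IsTwoForest S
  · by_cases hxy : G.reach S x y
    · have hq : G.reach S x q ↔ G.reach S y q :=
        ⟨fun h => reach_trans (reach_symm hxy) h, fun h => reach_trans hxy h⟩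
      by_cases hxq : G.reach S x q <;>
        simp [hTF, hxy, hxq, ← hq]
    · rcases reach_or_of_ncomp_two hTF.1 hxy q with h | h
      · have h1 : G.reach S x q := reach_symm h
        have h2 : ¬ G.reach S y q := fun hc => hxy (reach_trans h1 (reach_symm hc))
        simp [hTF, hxy, h1, h2]
      · have h1 : G.reach S y q := reach_symm h
        have h2 : ¬ G.reach S x q := fun hc => hxy (reach_trans hc (reach_symm h1))
        simp [hTF, hxy, h1, h2]
  · simp [hTF]

lemma reach_other_endpoints {S : Finset G.E} {e : G.E} {v : G.V} (hv : G.Ends e v) :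
    G.reach S v (G.other v e) ↔ G.reach S (G.fst e) (G.snd e) := by
  by_cases hf : G.fst e = v
  · rw [← hf, other_fst]
  · have hs := hv.resolve_left hf
    rw [← hs, other_snd]
    exact ⟨reach_symm, reach_symm⟩

/-- Difference of potential-kernel counts as a difference of "crossing" forest counts. -/
lemma tog_sub_tog (v u z q : G.V) :
    (G.kappa2Tog v z q : ℤ) - (G.kappa2Tog u z q : ℤ) =
      ((Nat.card {S : Finset G.E // G.IsTwoForest S ∧ ¬ G.reach S v u ∧
        (G.reach S v z ∧ G.reach S u q)}) : ℤ) -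
      ((Nat.card {S : Finset G.E // G.IsTwoForest S ∧ ¬ G.reach S v u ∧
        (G.reach S u z ∧ G.reach S v q)}) : ℤ) := by
  rw [kappa2Tog_eq, kappa2Tog_eq, natCard_subtype, natCard_subtype, Finset.card_filter,
    Finset.card_filter, Finset.card_filter, Finset.card_filter]
  push_cast
  rw [← Finset.sum_sub_distrib, ← Finset.sum_sub_distrib]
  refine Finset.sum_congr rfl fun S _ => ?_
  by_cases hTF : G.IsTwoForest S
  · by_cases hvu : G.reach S v u
    · have hz : G.reach S u z ↔ G.reach S v z :=
        ⟨fun h => reach_trans hvu h, fun h => reach_trans (reach_symm hvu) h⟩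
      have hq : G.reach S u q ↔ G.reach S v q :=
        ⟨fun h => reach_trans hvu h, fun h => reach_trans (reach_symm hvu) h⟩
      by_cases h1 : G.reach S v z <;> by_cases h2 : G.reach S v q <;>
        simp [hTF, hvu, hz, hq, h1, h2]
    · have hOz := reach_other_iff hTF hvu z
      have hOq := reach_other_iff hTF hvu q
      by_cases h1 : G.reach S v z <;> by_cases h2 : G.reach S v q <;>
        simp [hTF, hvu, hOz, hOq, h1, h2]
  · simp [hTF]

/-- Crossing two-forests with extra condition `p` correspond to spanning trees through `e`. -/
lemma forest_tree_card (e : G.E) (v : G.V) (hv : G.Ends e v) (p : Finset G.E → Prop) :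
    Nat.card {S : Finset G.E // G.IsTwoForest S ∧ ¬ G.reach S v (G.other v e) ∧ p S} =
    Nat.card {T : Finset G.E // G.IsSpanningTree T ∧ e ∈ T ∧ p (T.erase e)} := by
  have hmem : ∀ S : Finset G.E, (G.IsTwoForest S ∧ ¬ G.reach S v (G.other v e) ∧ p S) →
      e ∉ S := fun S hS hc => hS.2.1 ((reach_other_endpoints hv).2
        (step_reach ⟨e, hc, Or.inl ⟨rfl, rfl⟩⟩))
  refine Nat.card_congr ⟨fun S => ⟨insert e S.1, ?_⟩, fun T => ⟨T.1.erase e, ?_⟩, ?_, ?_⟩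
  · obtain ⟨S, hTF, hnr, hp⟩ := S
    have hnr' : ¬ G.reach S (G.fst e) (G.snd e) :=
      fun h => hnr ((reach_other_endpoints hv).2 h)
    obtain ⟨htree, heS⟩ := forest_plus_edge hTF hnr'
    refine ⟨htree, Finset.mem_insert_self _ _, ?_⟩
    rw [Finset.erase_insert heS]
    exact hp
  · obtain ⟨T, htree, heT, hp⟩ := T
    exact ⟨(tree_minus_edge htree heT).1, not_reach_erase_other htree heT hv, hp⟩
  · rintro ⟨S, hS⟩
    simp only [Subtype.mk.injEq]
    exact Finset.erase_insert (hmem S hS)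
  · rintro ⟨T, htree, heT, hp⟩
    simp only [Subtype.mk.injEq]
    exact Finset.insert_erase heT

end counting


section harmonic

/-- Per-tree branch count identity. -/
lemma tree_count {T : Finset G.E} (hT : G.IsSpanningTree T) (v z q : G.V) :
    (∑ e : G.E, if G.Ends e v ∧ e ∈ T ∧
        (G.reach (T.erase e) v z ∧ G.reach (T.erase e) (G.other v e) q) then (1:ℤ) else 0)
    - (∑ e : G.E, if G.Ends e v ∧ e ∈ T ∧
        (G.reach (T.erase e) (G.other v e) z ∧ G.reach (T.erase e) v q) then (1:ℤ) else 0)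
    = (if v = z then (1:ℤ) else 0) - (if v = q then 1 else 0) := by
  have hcond1 : ∀ e : G.E, (G.Ends e v ∧ e ∈ T ∧
      (G.reach (T.erase e) v z ∧ G.reach (T.erase e) (G.other v e) q)) ↔
      (G.Br T v q e ∧ G.reach (T.erase e) v z) := by
    intro e
    constructor
    · rintro ⟨hv, heT, hrz, hrq⟩
      have hTF := (tree_minus_edge hT heT).1
      have hvu := not_reach_erase_other hT heT hv
      exact ⟨⟨heT, hv, (reach_other_iff hTF hvu q).1 hrq⟩, hrz⟩
    · rintro ⟨⟨heT, hv, hnq⟩, hrz⟩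
      have hTF := (tree_minus_edge hT heT).1
      have hvu := not_reach_erase_other hT heT hv
      exact ⟨hv, heT, hrz, (reach_other_iff hTF hvu q).2 hnq⟩
  have hcond2 : ∀ e : G.E, (G.Ends e v ∧ e ∈ T ∧
      (G.reach (T.erase e) (G.other v e) z ∧ G.reach (T.erase e) v q)) ↔
      (G.Br T v z e ∧ G.reach (T.erase e) v q) := by
    intro e
    constructor
    · rintro ⟨hv, heT, hrz, hrq⟩
      have hTF := (tree_minus_edge hT heT).1
      have hvu := not_reach_erase_other hT heT hv
      exact ⟨⟨heT, hv, (reach_other_iff hTF hvu z).1 hrz⟩, hrq⟩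
    · rintro ⟨⟨heT, hv, hnz⟩, hrq⟩
      have hTF := (tree_minus_edge hT heT).1
      have hvu := not_reach_erase_other hT heT hv
      exact ⟨hv, heT, (reach_other_iff hTF hvu z).2 hnz, hrq⟩
  simp only [hcond1, hcond2]
  -- sum over the unique branch edge
  have key : ∀ x : G.V, ∀ A : G.E → Prop, x ≠ v →
      (∀ e, G.Br T v x e → A e) ∨ (∀ e, G.Br T v x e → ¬ A e) →
      True := fun _ _ _ _ => trivial
  have branch_sum : ∀ (x : G.V) (A : G.E → Prop), x ≠ v →
      ∃ e₀, G.Br T v x e₀ ∧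
        (∑ e : G.E, if G.Br T v x e ∧ A e then (1:ℤ) else 0) =
          (if A e₀ then 1 else 0) := by
    intro x A hx
    obtain ⟨e₀, he₀⟩ := branch_exists hT hx
    refine ⟨e₀, he₀, ?_⟩
    have : ∀ e, (G.Br T v x e ∧ A e) ↔ (e = e₀ ∧ A e₀) := by
      intro e
      constructor
      · rintro ⟨hb, ha⟩
        have : e = e₀ := by
          by_contra hne
          exact branch_unique hT hne hb he₀
        exact ⟨this, this ▸ ha⟩
      · rintro ⟨rfl, ha⟩
        exact ⟨he₀, ha⟩
    simp only [this]
    by_cases hA : A e₀ <;> simp [hA]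
  by_cases hvz : v = z
  · subst hvz
    by_cases hvq : v = q
    · subst hvq
      have h1 : ∀ e, ¬ (G.Br T v v e ∧ G.reach (T.erase e) v v) :=
        fun e h => br_ne h.1 rfl
      simp [h1]
    · obtain ⟨e₀, hb₀, hs⟩ := branch_sum q (fun e => G.reach (T.erase e) v v)
        (fun h => hvq h.symm)
      have h2 : ∀ e, ¬ (G.Br T v v e ∧ G.reach (T.erase e) v q) :=
        fun e h => br_ne h.1 rfl
      rw [hs]
      simp [h2, reach_refl, hvq]
  · by_cases hvq : v = q
    · subst hvq
      obtain ⟨e₀, hb₀, hs⟩ := branch_sum z (fun e => G.reach (T.erase e) v v)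
        (fun h => hvz h.symm)
      have h0 : ∀ e, ¬ (G.Br T v v e ∧ G.reach (T.erase e) v z) :=
        fun e h => br_ne h.1 rfl
      rw [hs]
      simp [h0, reach_refl, hvz]
    · obtain ⟨eq, hbq, hsq⟩ := branch_sum q (fun e => G.reach (T.erase e) v z)
        (fun h => hvq h.symm)
      obtain ⟨ez, hbz, hsz⟩ := branch_sum z (fun e => G.reach (T.erase e) v q)
        (fun h => hvz h.symm)
      rw [hsq, hsz]
      by_cases heqz : eq = ez
      · subst heqz
        have h1 : ¬ G.reach (T.erase eq) v z := hbz.2.2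
        have h2 : ¬ G.reach (T.erase eq) v q := hbq.2.2
        simp [h1, h2, hvz, hvq]
      · have h1 : G.reach (T.erase eq) v z := by
          by_contra hc
          exact branch_unique hT heqz ⟨hbq.1, hbq.2.1, hc⟩ hbz
        have h2 : G.reach (T.erase ez) v q := by
          by_contra hc
          exact branch_unique hT (fun h => heqz h.symm) ⟨hbz.1, hbz.2.1, hc⟩ hbq
        simp [h1, h2, hvz, hvq]

end harmonic


/-- The matrix-tree / harmonicity identity for the potential kernel, in integer form. -/
lemma A_int (v z q : G.V) :
    ∑ e : G.E, (if G.Ends e v then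
        ((G.kappa2Tog v z q : ℤ) - (G.kappa2Tog (G.other v e) z q : ℤ)) else 0) =
      ((if v = z then (1:ℤ) else 0) - (if v = q then 1 else 0)) * (G.kappa : ℤ) := by
  have step1 : ∀ e : G.E,
      (if G.Ends e v then
        ((G.kappa2Tog v z q : ℤ) - (G.kappa2Tog (G.other v e) z q : ℤ)) else 0) =
      ∑ T : Finset G.E,
        ((if G.Ends e v ∧ (G.IsSpanningTree T ∧ e ∈ T ∧
            (G.reach (T.erase e) v z ∧ G.reach (T.erase e) (G.other v e) q))
            then (1:ℤ) else 0) -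
         (if G.Ends e v ∧ (G.IsSpanningTree T ∧ e ∈ T ∧
            (G.reach (T.erase e) (G.other v e) z ∧ G.reach (T.erase e) v q))
            then (1:ℤ) else 0)) := by
    intro e
    by_cases hv : G.Ends e v
    · rw [if_pos hv, tog_sub_tog v (G.other v e) z q,
        forest_tree_card e v hv (fun S => G.reach S v z ∧ G.reach S (G.other v e) q),
        forest_tree_card e v hv (fun S => G.reach S (G.other v e) z ∧ G.reach S v q),
        natCard_subtype, natCard_subtype, Finset.card_filter, Finset.card_filter]
      push_cast
      rw [← Finset.sum_sub_distrib]
      refine Finset.sum_congr rfl fun T _ => ?_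
      simp [hv]
    · simp [hv]
  rw [Finset.sum_congr rfl (fun e _ => step1 e), Finset.sum_comm]
  have step2 : ∀ T : Finset G.E,
      (∑ e : G.E,
        ((if G.Ends e v ∧ (G.IsSpanningTree T ∧ e ∈ T ∧
            (G.reach (T.erase e) v z ∧ G.reach (T.erase e) (G.other v e) q))
            then (1:ℤ) else 0) -
         (if G.Ends e v ∧ (G.IsSpanningTree T ∧ e ∈ T ∧
            (G.reach (T.erase e) (G.other v e) z ∧ G.reach (T.erase e) v q))
            then (1:ℤ) else 0))) =
      (if G.IsSpanningTree T then
        ((if v = z then (1:ℤ) else 0) - (if v = q then 1 else 0)) else 0) := by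
    intro T
    by_cases hT : G.IsSpanningTree T
    · rw [if_pos hT, Finset.sum_sub_distrib, ← tree_count hT v z q]
      congr 1 <;> refine Finset.sum_congr rfl fun e _ => ?_ <;>
        refine if_congr ?_ rfl rfl <;>
        exact ⟨fun ⟨a, b⟩ => ⟨a, b.2⟩, fun ⟨a, b⟩ => ⟨a, hT, b⟩⟩
    · simp [hT]
  rw [Finset.sum_congr rfl (fun T _ => step2 T), Finset.sum_ite, Finset.sum_const,
    Finset.sum_const_zero, add_zero, kappa_eq]
  rw [nsmul_eq_mul, mul_comm]


section realLayer

lemma res_comm (x y : G.V) : G.res x y = G.res y x := by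
  rw [res, res, kappa2Sep_comm]

lemma res_self (x : G.V) : G.res x x = 0 := by
  rw [res, kappa2Sep_self]; simp

lemma jfun_self (q x : G.V) : G.jfun q x x = G.res x q := by
  rw [jfun, kappa2Tog_self, res]

lemma jfun_comm (q x y : G.V) : G.jfun q x y = G.jfun q y x := by
  rw [jfun, jfun, kappa2Tog_comm]

lemma jfun_q (q x : G.V) : G.jfun q x q = 0 := by
  rw [jfun, kappa2Tog_qq]; simp

lemma res_eq_jfun (x y q : G.V) :
    G.res x y = G.res x q + G.res y q - 2 * G.jfun q x y := by
  have h := sep_identity (G := G) x y q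
  have h' : (G.kappa2Sep x q : ℝ) + (G.kappa2Sep y q : ℝ) =
      (G.kappa2Sep x y : ℝ) + 2 * (G.kappa2Tog x y q : ℝ) := by exact_mod_cast h
  rw [res, res, res, jfun]
  by_cases hk : (G.kappa : ℝ) = 0
  · rw [hk]; simp
  · field_simp
    linarith

lemma A_real (hk : (G.kappa : ℝ) ≠ 0) (v z q : G.V) :
    ∑ e : G.E, (if G.Ends e v then (G.jfun q v z - G.jfun q (G.other v e) z) else 0) =
      (if v = z then (1:ℝ) else 0) - (if v = q then 1 else 0) := by
  have h := A_int (G := G) v z q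
  have h' : ∑ e : G.E, (if G.Ends e v then
      ((G.kappa2Tog v z q : ℝ) - (G.kappa2Tog (G.other v e) z q : ℝ)) else 0) =
      ((if v = z then (1:ℝ) else 0) - (if v = q then 1 else 0)) * (G.kappa : ℝ) := by
    have h2 := congrArg (fun n : ℤ => (n : ℝ)) h
    push_cast at h2
    convert h2 using 2
  have h3 : ∀ e : G.E, (if G.Ends e v then (G.jfun q v z - G.jfun q (G.other v e) z) else 0) =
      (if G.Ends e v then
        ((G.kappa2Tog v z q : ℝ) - (G.kappa2Tog (G.other v e) z q : ℝ)) else 0) / (G.kappa : ℝ) := by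
    intro e
    by_cases hv : G.Ends e v
    · rw [if_pos hv, if_pos hv, jfun, jfun, sub_div]
    · rw [if_neg hv, if_neg hv, zero_div]
  rw [Finset.sum_congr rfl (fun e _ => h3 e), ← Finset.sum_div, h',
    mul_div_cancel_right₀ _ hk]

lemma res_edge {e : G.E} {x : G.V} (hv : G.Ends e x) :
    G.res (G.fst e) (G.snd e) = G.res x (G.other x e) := by
  by_cases hf : G.fst e = x
  · rw [← hf, other_fst]
  · have hs := hv.resolve_left hf
    rw [← hs, other_snd, res_comm]

lemma sum_ends (f : G.V → G.V → ℝ) (e : G.E) :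
    ∑ x : G.V, (if G.Ends e x then f x (G.other x e) else 0) =
      f (G.fst e) (G.snd e) + f (G.snd e) (G.fst e) := by
  have hset : Finset.univ.filter (fun x => G.Ends e x) = {G.fst e, G.snd e} := by
    ext x
    simp [Ends, eq_comm]
  rw [← Finset.sum_filter, hset, Finset.sum_pair (G.no_loop e), other_fst, other_snd]

lemma mu_eq (hk : (G.kappa : ℝ) ≠ 0) (q x : G.V) :
    G.mu x = (if x = q then (1:ℝ) else 0) +
      (1/2) * ∑ e : G.E, (if G.Ends e x then (G.res x q - G.res (G.other x e) q) else 0) := by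
  have hA := A_real hk x x q
  rw [if_pos rfl] at hA
  have hA' : ∑ e : G.E, (if G.Ends e x then (G.res x q - G.jfun q x (G.other x e)) else 0) =
      1 - (if x = q then (1:ℝ) else 0) := by
    rw [← hA]
    refine Finset.sum_congr rfl fun e _ => ?_
    by_cases hv : G.Ends e x
    · rw [if_pos hv, if_pos hv, jfun_self, jfun_comm q (G.other x e) x]
    · rw [if_neg hv, if_neg hv]
  have e2 : ∑ e : G.E, (if G.Ends e x then (G.res x q - G.jfun q x (G.other x e)) else 0) =
      (∑ e : G.E, (if G.Ends e x then G.res x q else 0)) -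
      (∑ e : G.E, (if G.Ends e x then G.jfun q x (G.other x e) else 0)) := by
    rw [← Finset.sum_sub_distrib]
    refine Finset.sum_congr rfl fun e _ => ?_
    by_cases hv : G.Ends e x <;> simp [hv]
  have e1 : ∑ e : G.E, (if G.Ends e x then G.res x (G.other x e) else 0) =
      (∑ e : G.E, (if G.Ends e x then G.res x q else 0)) +
      (∑ e : G.E, (if G.Ends e x then G.res (G.other x e) q else 0)) -
      2 * (∑ e : G.E, (if G.Ends e x then G.jfun q x (G.other x e) else 0)) := by
    rw [Finset.mul_sum, ← Finset.sum_add_distrib, ← Finset.sum_sub_distrib]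
    refine Finset.sum_congr rfl fun e _ => ?_
    by_cases hv : G.Ends e x <;> simp [hv]
    exact res_eq_jfun _ _ _
  have e3 : ∑ e : G.E, (if G.Ends e x then (G.res x q - G.res (G.other x e) q) else 0) =
      (∑ e : G.E, (if G.Ends e x then G.res x q else 0)) -
      (∑ e : G.E, (if G.Ends e x then G.res (G.other x e) q else 0)) := by
    rw [← Finset.sum_sub_distrib]
    refine Finset.sum_congr rfl fun e _ => ?_
    by_cases hv : G.Ends e x <;> simp [hv]
  have hmu : G.mu x = 1 - (1/2) *
      ∑ e : G.E, (if G.Ends e x then G.res x (G.other x e) else 0) := by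
    rw [mu]
    congr 2
    refine Finset.sum_congr rfl fun e _ => ?_
    by_cases hv : G.Ends e x
    · have hv' : G.fst e = x ∨ G.snd e = x := hv
      rw [if_pos hv', if_pos hv, res_edge hv]
    · have hv' : ¬ (G.fst e = x ∨ G.snd e = x) := hv
      rw [if_neg hv', if_neg hv]
  rw [hmu, e1, e3]
  rw [e2] at hA'
  linarith

lemma sum_mu (hk : (G.kappa : ℝ) ≠ 0) (q : G.V) : ∑ x : G.V, G.mu x = 1 := by
  rw [Finset.sum_congr rfl (fun x _ => mu_eq hk q x), Finset.sum_add_distrib]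
  have h1 : ∑ x : G.V, (if x = q then (1:ℝ) else 0) = 1 := by
    simp [Finset.sum_ite_eq']
  have h2 : ∑ x : G.V, ((1/2) * ∑ e : G.E,
      (if G.Ends e x then (G.res x q - G.res (G.other x e) q) else 0)) = 0 := by
    rw [← Finset.mul_sum, Finset.sum_comm]
    have : ∀ e : G.E, ∑ x : G.V,
        (if G.Ends e x then (G.res x q - G.res (G.other x e) q) else 0) = 0 := by
      intro e
      rw [sum_ends (fun a b => G.res a q - G.res b q) e]
      ring
    rw [Finset.sum_congr rfl (fun e _ => this e)]
    simp
  rw [h1, h2]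
  ring

lemma sum_jfun_mu (hk : (G.kappa : ℝ) ≠ 0) (q v : G.V) :
    ∑ x : G.V, G.jfun q v x * G.mu x = (1/2) * G.res v q := by
  rw [Finset.sum_congr rfl (fun x _ => by rw [mu_eq hk q x])]
  have expand : ∀ x : G.V, G.jfun q v x * ((if x = q then (1:ℝ) else 0) +
      (1/2) * ∑ e : G.E, (if G.Ends e x then (G.res x q - G.res (G.other x e) q) else 0)) =
      (if x = q then G.jfun q v x else 0) +
      (1/2) * ∑ e : G.E, (if G.Ends e x then
        (G.jfun q v x * (G.res x q - G.res (G.other x e) q)) else 0) := by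
    intro x
    rw [mul_add, mul_boole]
    congr 1
    rw [mul_left_comm, Finset.mul_sum]
    congr 1
    refine Finset.sum_congr rfl fun e _ => ?_
    by_cases hv : G.Ends e x <;> simp [hv]
  rw [Finset.sum_congr rfl (fun x _ => expand x), Finset.sum_add_distrib]
  have h1 : ∑ x : G.V, (if x = q then G.jfun q v x else 0) = 0 := by
    rw [Finset.sum_ite_eq' Finset.univ q (fun x => G.jfun q v x)]
    simp [jfun_q]
  -- double sum: swap and use A_real in the other index
  have h2 : ∑ x : G.V, ((1/2) * ∑ e : G.E, (if G.Ends e x then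
      (G.jfun q v x * (G.res x q - G.res (G.other x e) q)) else 0)) =
      (1/2) * G.res v q := by
    rw [← Finset.mul_sum]
    congr 1
    have swap1 : ∑ x : G.V, ∑ e : G.E, (if G.Ends e x then
        (G.jfun q v x * (G.res x q - G.res (G.other x e) q)) else 0) =
        ∑ x : G.V, G.res x q * ∑ e : G.E, (if G.Ends e x then
          (G.jfun q x v - G.jfun q (G.other x e) v) else 0) := by
      calc ∑ x : G.V, ∑ e : G.E, (if G.Ends e x then
            (G.jfun q v x * (G.res x q - G.res (G.other x e) q)) else 0)
          = ∑ e : G.E, ∑ x : G.V, (if G.Ends e x then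
            (G.jfun q v x * (G.res x q - G.res (G.other x e) q)) else 0) :=
            Finset.sum_comm
        _ = ∑ e : G.E, ∑ x : G.V, (if G.Ends e x then
            (G.res x q * (G.jfun q x v - G.jfun q (G.other x e) v)) else 0) := by
            refine Finset.sum_congr rfl fun e _ => ?_
            rw [sum_ends (fun a b => G.jfun q v a * (G.res a q - G.res b q)) e,
              sum_ends (fun a b => G.res a q * (G.jfun q a v - G.jfun q b v)) e,
              jfun_comm q v (G.fst e), jfun_comm q v (G.snd e)]
            ring
        _ = ∑ x : G.V, ∑ e : G.E, (if G.Ends e x then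
            (G.res x q * (G.jfun q x v - G.jfun q (G.other x e) v)) else 0) :=
            Finset.sum_comm
        _ = ∑ x : G.V, G.res x q * ∑ e : G.E, (if G.Ends e x then
            (G.jfun q x v - G.jfun q (G.other x e) v) else 0) := by
            refine Finset.sum_congr rfl fun x _ => ?_
            rw [Finset.mul_sum]
            refine Finset.sum_congr rfl fun e _ => ?_
            by_cases hv : G.Ends e x <;> simp [hv]
    rw [swap1, Finset.sum_congr rfl (fun x _ => by rw [A_real hk x v q])]
    have : ∀ x : G.V, G.res x q * ((if x = v then (1:ℝ) else 0) - (if x = q then 1 else 0)) =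
        (if x = v then G.res x q else 0) - (if x = q then G.res x q else 0) := by
      intro x
      rw [mul_sub, mul_boole, mul_boole]
    rw [Finset.sum_congr rfl (fun x _ => this x), Finset.sum_sub_distrib,
      Finset.sum_ite_eq' Finset.univ v (fun x => G.res x q),
      Finset.sum_ite_eq' Finset.univ q (fun x => G.res x q)]
    simp [res_self]
  rw [h1, h2]
  ring

lemma row_const (hk : (G.kappa : ℝ) ≠ 0) (q v : G.V) :
    ∑ x : G.V, G.res v x * G.mu x = ∑ x : G.V, G.res x q * G.mu x := by
  have expand : ∀ x : G.V, G.res v x * G.mu x =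
      G.res v q * G.mu x + G.res x q * G.mu x - 2 * (G.jfun q v x * G.mu x) := by
    intro x
    rw [res_eq_jfun v x q]
    ring
  rw [Finset.sum_congr rfl (fun x _ => expand x), Finset.sum_sub_distrib,
    Finset.sum_add_distrib, ← Finset.mul_sum, ← Finset.mul_sum,
    sum_mu hk q, sum_jfun_mu hk q v]
  ring

end realLayer

end Multigraph

theorem res_mul_mu_constant (G : Multigraph) (hG : G.IsConnected) :
    G.resMatrix.mulVec G.mu =
      fun _ => G.mu ⬝ᵥ G.resMatrix.mulVec G.mu := by
  classical
  by_cases hk0 : G.kappa = 0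
  · have hres : ∀ a b, G.res a b = 0 := fun a b => by
      rw [Multigraph.res, hk0]; simp
    have hz : G.resMatrix.mulVec G.mu = fun _ => 0 := by
      funext v
      simp [Matrix.mulVec, dotProduct, Multigraph.resMatrix, hres]
    rw [hz]
    funext v
    simp [dotProduct]
  · have hk : (G.kappa : ℝ) ≠ 0 := Nat.cast_ne_zero.2 hk0
    have hV : Nonempty G.V := by
      have h2 : Nonempty {S : Finset G.E // G.IsSpanningTree S} := by
        by_contra hc
        rw [not_nonempty_iff] at hc
        exact hk0 Nat.card_of_isEmpty
      obtain ⟨⟨T, hT⟩⟩ := h2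
      have := hT.2
      exact Fintype.card_pos_iff.1 (by omega)
    obtain ⟨q⟩ := hV
    have hrow : ∀ v, (G.resMatrix.mulVec G.mu) v = ∑ x : G.V, G.res x q * G.mu x := by
      intro v
      have h1 : (G.resMatrix.mulVec G.mu) v = ∑ x : G.V, G.res v x * G.mu x := by
        simp [Matrix.mulVec, dotProduct, Multigraph.resMatrix]
      rw [h1]
      exact Multigraph.row_const hk q v
    funext v
    rw [hrow v]
    have hdot : G.mu ⬝ᵥ G.resMatrix.mulVec G.mu =
        ∑ w : G.V, G.mu w * (∑ x : G.V, G.res x q * G.mu x) := by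
      rw [dotProduct]
      exact Finset.sum_congr rfl fun w _ => by rw [hrow w]
    rw [hdot, ← Finset.sum_mul, Multigraph.sum_mu hk q, one_mul]
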